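/- There exist a constant C > 0 and h₀ > 0 such that for every h with 0 < h ≤ h₀ and every ω ∈ E, ‖(D₀ + h·D_⊥ + h²·F)ω‖² ≥ (1/2)·‖D₀ω‖² + (1/2)·h²·‖D_⊥ω‖² − C·h²·‖ω‖²; that is, setting D_h = D₀ + h·D_⊥ + h²·F and Δ_h = D_h², Δ_0 = D₀², Δ_⊥ = D_⊥², one has Δ_h ≥ (1/2)Δ_0 + (1/2)h²Δ_⊥ − Ch² in the sense of quadratic forms on E. -/
import Mathlib

set_option maxHeartbeats 1000000


open scoped RealInnerProductSpace

/-- Let `E` be a real inner product space (not assumed complete) and let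
`D₀, D⊥, F, B, B' : E → E` be linear maps such that `D₀`, `D⊥` and `F` are symmetric,
`⟨Bx, y⟩ = ⟨x, B'y⟩` for all `x, y`, there is `C' ≥ 0` with `‖Bx‖² ≤ C'‖x‖²`,
`‖B'x‖² ≤ C'‖x‖²` and `‖Fx‖² ≤ C'‖x‖²`, and the anticommutator identity
`D⊥D₀ + D₀D⊥ = BD₀ + D₀B'` holds. Then there exist `C > 0` and `h₀ > 0` such that for every
`0 < h ≤ h₀` and every `ω ∈ E`,
`‖(D₀ + h·D⊥ + h²·F)ω‖² ≥ (1/2)‖D₀ω‖² + (1/2)h²‖D⊥ω‖² − C·h²·‖ω‖²`;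
i.e. `Δ_h ≥ (1/2)Δ₀ + (1/2)h²Δ⊥ − Ch²` in the sense of quadratic forms on `E`. -/
theorem statement13 {E : Type*} [NormedAddCommGroup E] [InnerProductSpace ℝ E]
    (D₀ Dperp F B B' : E →ₗ[ℝ] E)
    (hD₀ : ∀ x y : E, ⟪D₀ x, y⟫ = ⟪x, D₀ y⟫)
    (hDperp : ∀ x y : E, ⟪Dperp x, y⟫ = ⟪x, Dperp y⟫)
    (hF : ∀ x y : E, ⟪F x, y⟫ = ⟪x, F y⟫)
    (hBB' : ∀ x y : E, ⟪B x, y⟫ = ⟪x, B' y⟫)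
    (C' : ℝ) (hC' : 0 ≤ C')
    (hB : ∀ x : E, ‖B x‖ ^ 2 ≤ C' * ‖x‖ ^ 2)
    (hB' : ∀ x : E, ‖B' x‖ ^ 2 ≤ C' * ‖x‖ ^ 2)
    (hFb : ∀ x : E, ‖F x‖ ^ 2 ≤ C' * ‖x‖ ^ 2)
    (hanti : Dperp ∘ₗ D₀ + D₀ ∘ₗ Dperp = B ∘ₗ D₀ + D₀ ∘ₗ B') :
    ∃ C > (0 : ℝ), ∃ h₀ > (0 : ℝ), ∀ h : ℝ, 0 < h → h ≤ h₀ → ∀ ω : E,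
      (1 / 2) * ‖D₀ ω‖ ^ 2 + (1 / 2) * h ^ 2 * ‖Dperp ω‖ ^ 2 - C * h ^ 2 * ‖ω‖ ^ 2 ≤
        ‖(D₀ + h • Dperp + h ^ 2 • F) ω‖ ^ 2 := by
  refine ⟨10 * C' + 1, by linarith, 1, one_pos, ?_⟩
  intro h hpos hle ω
  set u := D₀ ω with hu
  set v := Dperp ω with hv
  set w := F ω with hw
  -- key identity for the cross term
  have hanti' : Dperp (D₀ ω) + D₀ (Dperp ω) = B (D₀ ω) + D₀ (B' ω) := by
    have := congrArg (fun (T : E →ₗ[ℝ] E) => T ω) hanti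
    simpa using this
  have key : ⟪u, v⟫ = ⟪u, B' ω⟫ := by
    have h1 : ⟪Dperp (D₀ ω) + D₀ (Dperp ω), ω⟫ = ⟪B (D₀ ω) + D₀ (B' ω), ω⟫ := by
      rw [hanti']
    rw [inner_add_left, inner_add_left] at h1
    have t1 : ⟪D₀ (Dperp ω), ω⟫ = ⟪D₀ ω, Dperp ω⟫ := by
      rw [real_inner_comm, ← hD₀ ω (Dperp ω)]
    have t2 : ⟪Dperp (D₀ ω), ω⟫ = ⟪D₀ ω, Dperp ω⟫ := by
      rw [hDperp (D₀ ω) ω]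
    have t3 : ⟪B (D₀ ω), ω⟫ = ⟪D₀ ω, B' ω⟫ := hBB' _ _
    have t4 : ⟪D₀ (B' ω), ω⟫ = ⟪D₀ ω, B' ω⟫ := by
      rw [real_inner_comm, ← hD₀ ω (B' ω)]
    have : ⟪D₀ ω, Dperp ω⟫ = ⟪D₀ ω, B' ω⟫ := by linarith
    simpa [hu, hv] using this
  -- expansion of the square
  have expand : ‖u + h • v + h ^ 2 • w‖ ^ 2 =
      ‖u‖ ^ 2 + h ^ 2 * ‖v‖ ^ 2 + h ^ 4 * ‖w‖ ^ 2
        + 2 * h * ⟪u, v⟫ + 2 * h ^ 2 * ⟪u, w⟫ + 2 * h ^ 3 * ⟪v, w⟫ := by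
    have e1 : ‖u + h • v + h ^ 2 • w‖ ^ 2 = ⟪u + h • v + h ^ 2 • w, u + h • v + h ^ 2 • w⟫ :=
      (real_inner_self_eq_norm_sq _).symm
    rw [e1]
    simp only [inner_add_left, inner_add_right, real_inner_smul_left, real_inner_smul_right]
    simp only [real_inner_self_eq_norm_sq]
    rw [real_inner_comm v u, real_inner_comm w u, real_inner_comm w v]
    ring
  have happ : (D₀ + h • Dperp + h ^ 2 • F) ω = u + h • v + h ^ 2 • w := by
    simp [hu, hv, hw]
  rw [happ, expand, key]
  -- Cauchy-Schwarz bounds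
  have cs1 : -(‖u‖ * ‖B' ω‖) ≤ ⟪u, B' ω⟫ := neg_le_of_abs_le (abs_real_inner_le_norm _ _)
  have cs2 : -(‖u‖ * ‖w‖) ≤ ⟪u, w⟫ := neg_le_of_abs_le (abs_real_inner_le_norm _ _)
  have cs3 : -(‖v‖ * ‖w‖) ≤ ⟪v, w⟫ := neg_le_of_abs_le (abs_real_inner_le_norm _ _)
  have hb' := hB' ω
  have hfb := hFb ω
  have hun : (0:ℝ) ≤ ‖u‖ := norm_nonneg _
  have hvn : (0:ℝ) ≤ ‖v‖ := norm_nonneg _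
  have hwn : (0:ℝ) ≤ ‖w‖ := norm_nonneg _
  have hωn : (0:ℝ) ≤ ‖ω‖ := norm_nonneg _
  have hbn : (0:ℝ) ≤ ‖B' ω‖ := norm_nonneg _
  have h4le : h ^ 4 ≤ h ^ 2 := pow_le_pow_of_le_one hpos.le hle (by norm_num)
  have hfb4 : h ^ 4 * ‖w‖ ^ 2 ≤ h ^ 2 * (C' * ‖ω‖ ^ 2) := by
    calc h ^ 4 * ‖w‖ ^ 2 ≤ h ^ 4 * (C' * ‖ω‖ ^ 2) :=
          mul_le_mul_of_nonneg_left hfb (pow_nonneg hpos.le 4)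
      _ ≤ h ^ 2 * (C' * ‖ω‖ ^ 2) :=
          mul_le_mul_of_nonneg_right h4le (mul_nonneg hC' (sq_nonneg _))
  have hb2 : h ^ 2 * ‖B' ω‖ ^ 2 ≤ h ^ 2 * (C' * ‖ω‖ ^ 2) :=
    mul_le_mul_of_nonneg_left hb' (sq_nonneg h)
  have b1 : -((1/4) * ‖u‖ ^ 2 + 4 * (h ^ 2 * (C' * ‖ω‖ ^ 2))) ≤ 2 * h * ⟪u, B' ω⟫ := by
    have c1 : 2 * h * (-(‖u‖ * ‖B' ω‖)) ≤ 2 * h * ⟪u, B' ω⟫ :=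
      mul_le_mul_of_nonneg_left cs1 (by linarith)
    nlinarith [sq_nonneg (‖u‖ - 4 * h * ‖B' ω‖), hb2]
  have b2 : -((1/4) * ‖u‖ ^ 2 + 4 * (h ^ 2 * (C' * ‖ω‖ ^ 2))) ≤ 2 * h ^ 2 * ⟪u, w⟫ := by
    have c2 : 2 * h ^ 2 * (-(‖u‖ * ‖w‖)) ≤ 2 * h ^ 2 * ⟪u, w⟫ :=
      mul_le_mul_of_nonneg_left cs2 (by positivity)
    nlinarith [sq_nonneg (‖u‖ - 4 * h ^ 2 * ‖w‖), hfb4]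
  have b3 : -((1/2) * h ^ 2 * ‖v‖ ^ 2 + 2 * (h ^ 2 * (C' * ‖ω‖ ^ 2))) ≤ 2 * h ^ 3 * ⟪v, w⟫ := by
    have c3 : 2 * h ^ 3 * (-(‖v‖ * ‖w‖)) ≤ 2 * h ^ 3 * ⟪v, w⟫ :=
      mul_le_mul_of_nonneg_left cs3 (by positivity)
    nlinarith [sq_nonneg (h * ‖v‖ - 2 * h ^ 2 * ‖w‖), hfb4]
  have hw4 : (0:ℝ) ≤ h ^ 4 * ‖w‖ ^ 2 := by positivity
  have hω2 : (0:ℝ) ≤ h ^ 2 * ‖ω‖ ^ 2 := by positivity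
  linarith
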